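/- arXiv:math-ph/9907011 — 2 statements merged into one kernel-verified Lean document; each statement's English description precedes it below -/
import Mathlib

section
/- The binary Rudin–Shapiro sequence x contains no palindromic factor of length 16: there is no i : ℕ such that x (i + j) = x (i + 15 − j) for all j < 16. -/
/-- `rsCount n` is the number of (possibly overlapping) `11`-blocks in the binary
expansion of `n`, i.e. the number of indices `k` such that bits `k` and `k+1` of `n`
are both `1`.  (Bits `k ≥ n` of `n` all vanish, so `Finset.range n` suffices.) -/
def rsCount (n : ℕ) : ℕ :=
  ((Finset.range n).filter (fun k => n.testBit k ∧ n.testBit (k + 1))).card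

open Fin.NatCast in
/-- The binary Rudin–Shapiro sequence, `x n = rsCount n (mod 2)`. -/
def rsB (n : ℕ) : Fin 2 := (rsCount n : Fin 2)

/-- The sequence `x` contains a palindromic factor of length `ℓ`. -/
def HasPalFactor {A : Type*} (x : ℕ → A) (ℓ : ℕ) : Prop :=
  ∃ i : ℕ, ∀ j < ℓ, x (i + j) = x (i + ℓ - 1 - j)

/-- The sequence `x` is palindromic: it contains palindromic factors of
arbitrarily large length. -/
def Palindromic {A : Type*} (x : ℕ → A) : Prop :=
  ∀ N : ℕ, ∃ ℓ : ℕ, N ≤ ℓ ∧ HasPalFactor x ℓ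


lemma testBit_of_le {n k : ℕ} (h : n ≤ k) : n.testBit k = false := by
  apply Nat.testBit_lt_two_pow
  calc n < 2^n := Nat.lt_two_pow_self
    _ ≤ 2^k := Nat.pow_le_pow_right (by norm_num) h

lemma rsCount_eq_sum (n N : ℕ) (h : n ≤ N) :
    rsCount n = ∑ k ∈ Finset.range N, (if n.testBit k ∧ n.testBit (k+1) then 1 else 0) := by
  rw [rsCount, Finset.card_filter]
  apply Finset.sum_subset (Finset.range_subset_range.2 h)
  intro k hk hk'
  simp only [Finset.mem_range, not_lt] at hk'
  simp [testBit_of_le (le_trans hk' (Nat.le_succ k)), testBit_of_le hk']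

lemma rsCount_rec (n : ℕ) :
    rsCount n = rsCount (n / 2) + (if n % 4 = 3 then 1 else 0) := by
  rw [rsCount_eq_sum n (n+1) (Nat.le_succ n), Finset.sum_range_succ',
    rsCount_eq_sum (n/2) n (Nat.div_le_self n 2)]
  congr 1
  · exact Finset.sum_congr rfl fun k _ => by rw [Nat.testBit_div_two, Nat.testBit_div_two]
  · have h0 : n.testBit 0 = decide (n % 2 = 1) := Nat.testBit_zero n
    have h1 : n.testBit 1 = decide ((n/2) % 2 = 1) := by
      rw [show (1:ℕ) = 0 + 1 from rfl, ← Nat.testBit_div_two, Nat.testBit_zero]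
    rw [h0, h1]
    have e1 : n % 2 = (n % 4) % 2 := (Nat.mod_mod_of_dvd n (by norm_num)).symm
    have e2 : n / 2 % 2 = (n % 4) / 2 := by omega
    have e3 : n % 4 < 4 := Nat.mod_lt n (by norm_num)
    rw [e1, e2]
    interval_cases h : n % 4 <;> simp

lemma rsCount_zero : rsCount 0 = 0 := rfl

lemma rsCount_sixteen (m s : ℕ) (hs : s < 16) :
    rsCount (16 * m + s) = rsCount m + rsCount s
      + (if m % 2 = 1 ∧ 8 ≤ s then 1 else 0) := by
  have h1 : (16*m+s)/2 = 8*m + s/2 := by omega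
  have h2 : (8*m+s/2)/2 = 4*m + s/2/2 := by omega
  have h3 : (4*m+s/2/2)/2 = 2*m + s/2/2/2 := by omega
  have h4 : (2*m+s/2/2/2)/2 = m := by omega
  have h5 : s/2/2/2/2 = 0 := by omega
  have e1 : ((16*m+s) % 4 = 3) ↔ (s % 4 = 3) := by omega
  have e2 : ((8*m+s/2) % 4 = 3) ↔ (s/2 % 4 = 3) := by omega
  have e3 : ((4*m+s/2/2) % 4 = 3) ↔ (s/2/2 % 4 = 3) := by omega
  have e4 : ((2*m+s/2/2/2) % 4 = 3) ↔ (m % 2 = 1 ∧ 8 ≤ s) := by omega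
  have e5 : ¬ (s/2/2/2 % 4 = 3) := by omega
  rw [rsCount_rec (16*m+s), h1, rsCount_rec, h2, rsCount_rec, h3, rsCount_rec, h4,
      rsCount_rec s, rsCount_rec (s/2), rsCount_rec (s/2/2), rsCount_rec (s/2/2/2),
      h5, rsCount_zero]
  simp only [e1, e2, e3, e4, if_neg e5]
  ring

/-- Value of `rsB (16*m + t)` for `t < 32`, in terms of
`a = rsB m`, `b = rsB (m+1)`, `e = m % 2`. -/
def blockVal (a b : Fin 2) (e : ℕ) (t : ℕ) : Fin 2 :=
  if t < 16 then a + rsB t + (if e = 1 ∧ 8 ≤ t then 1 else 0)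
  else b + rsB (t - 16) + (if e = 0 ∧ 8 ≤ t - 16 then 1 else 0)

open Fin.NatCast Fin.CommRing in
lemma rsB_sixteen (m s : ℕ) (hs : s < 16) :
    rsB (16 * m + s) = rsB m + rsB s + (if m % 2 = 1 ∧ 8 ≤ s then 1 else 0) := by
  rw [rsB, rsCount_sixteen m s hs]
  push_cast
  simp [rsB]

lemma rsB_block (m t : ℕ) (ht : t < 32) :
    rsB (16 * m + t) = blockVal (rsB m) (rsB (m + 1)) (m % 2) t := by
  by_cases h : t < 16
  · rw [blockVal, if_pos h, rsB_sixteen m t h]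
  · rw [blockVal, if_neg h]
    have h16 : 16 * m + t = 16 * (m + 1) + (t - 16) := by omega
    rw [h16, rsB_sixteen (m+1) (t-16) (by omega)]
    congr 1
    have : ((m+1) % 2 = 1) ↔ (m % 2 = 0) := by omega
    simp only [this]

lemma blockCheck : ∀ r < 16, ∀ a b : Fin 2, ∀ e < 2,
    ¬ (∀ j < 16, blockVal a b e (r + j) = blockVal a b e (r + 15 - j)) := by
  decide

/-- The binary Rudin–Shapiro sequence contains no palindromic factor of length 16. -/
theorem rsB_no_palindrome_sixteen :
    ¬ ∃ i : ℕ, ∀ j < 16, rsB (i + j) = rsB (i + 15 - j) := by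
  rintro ⟨i, h⟩
  obtain ⟨m, r, hr, rfl⟩ : ∃ m r, r < 16 ∧ i = 16 * m + r :=
    ⟨i / 16, i % 16, by omega, by omega⟩
  refine blockCheck r hr (rsB m) (rsB (m+1)) (m % 2) (by omega) ?_
  intro j hj
  have hj' := h j hj
  have e1 : 16 * m + r + j = 16 * m + (r + j) := by omega
  have e2 : 16 * m + r + 15 - j = 16 * m + (r + 15 - j) := by omega
  rw [e1, e2] at hj'
  rw [rsB_block m (r + j) (by omega), rsB_block m (r + 15 - j) (by omega)] at hj'
  exact hj'
end

section
/- The binary Rudin–Shapiro sequence x contains no palindromic factor of any length m ≥ 15; in particular, x is not palindromic. -/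
/-! ### Auxiliary lemmas -/

lemma rsCount_eq_of_le {n m : ℕ} (h : n ≤ m) :
    rsCount n = ((Finset.range m).filter (fun k => n.testBit k ∧ n.testBit (k + 1))).card := by
  unfold rsCount
  congr 1
  apply Finset.ext
  intro k
  simp only [Finset.mem_filter, Finset.mem_range]
  constructor
  · rintro ⟨hk, h1, h2⟩; exact ⟨lt_of_lt_of_le hk h, h1, h2⟩
  · rintro ⟨hk, h1, h2⟩
    refine ⟨?_, h1, h2⟩
    calc k < 2^k := Nat.lt_two_pow_self
    _ ≤ n := Nat.ge_two_pow_of_testBit h1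

lemma rsCount_two_mul (n : ℕ) : rsCount (2 * n) = rsCount n := by
  rw [rsCount_eq_of_le (show 2*n ≤ 2*n+1+1 by omega), Finset.card_filter,
    Finset.sum_range_succ']
  have h0 : ¬ ((2*n).testBit 0 ∧ (2*n).testBit 1) := by
    intro ⟨h1, _⟩
    simp [Nat.testBit_zero, Nat.mul_mod_right] at h1
  rw [if_neg h0, add_zero]
  have hb : ∀ k, (2*n).testBit (k+1) = n.testBit k := by
    intro k
    rw [Nat.testBit_succ, Nat.mul_div_cancel_left _ (by norm_num)]
  rw [rsCount_eq_of_le (show n ≤ 2*n+1 by omega), Finset.card_filter]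
  apply Finset.sum_congr rfl
  intro k _
  simp [hb]

lemma rsCount_two_mul_add_one (n : ℕ) : rsCount (2 * n + 1) = rsCount n + n % 2 := by
  rw [rsCount_eq_of_le (show 2*n+1 ≤ 2*n+1+1 by omega), Finset.card_filter,
    Finset.sum_range_succ']
  have hd : (2*n+1)/2 = n := by omega
  have hb : ∀ k, (2*n+1).testBit (k+1) = n.testBit k := by
    intro k
    rw [Nat.testBit_succ, hd]
  have h0 : ((2*n+1).testBit 0 ∧ (2*n+1).testBit 1) ↔ n % 2 = 1 := by
    rw [hb 0]
    simp [Nat.testBit_zero]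
  have key : (if ((2*n+1).testBit 0 ∧ (2*n+1).testBit (0+1)) then 1 else 0) = n % 2 := by
    by_cases h : ((2*n+1).testBit 0 ∧ (2*n+1).testBit (0+1))
    · rw [if_pos h]; rw [h0] at h; omega
    · rw [if_neg h]; rw [h0] at h; omega
  rw [key]
  congr 1
  rw [rsCount_eq_of_le (show n ≤ 2*n+1 by omega), Finset.card_filter]
  apply Finset.sum_congr rfl
  intro k _
  simp [hb]

lemma rsCount_split (k : ℕ) : ∀ t s : ℕ, s < 2^k →
    rsCount (2^k * t + s) = rsCount t + rsCount (s + t % 2 * 2^k) := by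
  induction k with
  | zero =>
    intro t s hs
    interval_cases s
    simp only [pow_zero, mul_one, one_mul, add_zero, zero_add]
    have : rsCount (t % 2) = 0 := by
      rcases Nat.mod_two_eq_zero_or_one t with h | h <;> rw [h] <;> decide
    omega
  | succ k ih =>
    intro t s hs
    rcases Nat.even_or_odd s with ⟨s', rfl⟩ | ⟨s', rfl⟩
    · have e1 : 2^(k+1) * t + (s' + s') = 2 * (2^k * t + s') := by
        rw [pow_succ]; ring
      have e2 : (s' + s') + t % 2 * 2^(k+1) = 2 * (s' + t % 2 * 2^k) := by
        rw [pow_succ]; ring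
      rw [e1, e2, rsCount_two_mul, rsCount_two_mul, ih t s' (by rw [pow_succ] at hs; omega)]
    · have e1 : 2^(k+1) * t + (2 * s' + 1) = 2 * (2^k * t + s') + 1 := by
        rw [pow_succ]; ring
      have e2 : (2 * s' + 1) + t % 2 * 2^(k+1) = 2 * (s' + t % 2 * 2^k) + 1 := by
        rw [pow_succ]; ring
      rw [e1, e2, rsCount_two_mul_add_one, rsCount_two_mul_add_one,
        ih t s' (by rw [pow_succ] at hs; omega)]
      have hm : (2^k * t) % 2 = (t % 2 * 2^k) % 2 := by
        simp [Nat.mul_mod, Nat.mul_comm]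
      omega

open Fin.NatCast in
/-- The value of `rsB` in a window of length 16: it is determined by the residue
`r = i % 16`, the parity of `t = i / 16`, and the values `rsB t`, `rsB (t+1)`. -/
def rsW (r p : ℕ) (a b : Fin 2) (j : ℕ) : Fin 2 :=
  if r + j < 16 then a + (rsCount (r + j + p * 16) : Fin 2)
  else b + (rsCount (r + j - 16 + (1 - p) * 16) : Fin 2)

open Fin.NatCast in
lemma rsB_split (t s : ℕ) (hs : s < 16) :
    rsB (16 * t + s) = rsB t + (rsCount (s + t % 2 * 16) : Fin 2) := by
  unfold rsB
  have h := rsCount_split 4 t s (by norm_num; omega)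
  norm_num at h
  rw [h]
  push_cast
  ring

lemma rsB_window (t r j : ℕ) (hr : r < 16) (hj : j ≤ 15) :
    rsB (16 * t + r + j) = rsW r (t % 2) (rsB t) (rsB (t + 1)) j := by
  unfold rsW
  by_cases h : r + j < 16
  · rw [if_pos h, add_assoc, rsB_split t (r + j) h]
  · rw [if_neg h]
    have e : 16 * t + r + j = 16 * (t + 1) + (r + j - 16) := by omega
    rw [e, rsB_split (t + 1) (r + j - 16) (by omega)]
    have : (t + 1) % 2 = 1 - t % 2 := by omega
    rw [this]

lemma check15 : ∀ r : Fin 16, ∀ p : Fin 2, ∀ a b : Fin 2,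
    ∃ j : Fin 15, rsW r p a b j ≠ rsW r p a b (14 - (j : ℕ)) := by decide +kernel

lemma check16 : ∀ r : Fin 16, ∀ p : Fin 2, ∀ a b : Fin 2,
    ∃ j : Fin 16, rsW r p a b j ≠ rsW r p a b (15 - (j : ℕ)) := by decide +kernel

lemma rsB_no_pal_of_base (L : ℕ) (hL : L = 15 ∨ L = 16)
    (hch : ∀ r : Fin 16, ∀ p : Fin 2, ∀ a b : Fin 2,
      ∃ j : Fin L, rsW r p a b j ≠ rsW r p a b (L - 1 - (j : ℕ))) :
    ¬ HasPalFactor rsB L := by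
  rintro ⟨i, h⟩
  have hr : i % 16 < 16 := Nat.mod_lt _ (by norm_num)
  have hp : i / 16 % 2 < 2 := Nat.mod_lt _ (by norm_num)
  obtain ⟨j, hj⟩ := hch ⟨i % 16, hr⟩ ⟨i / 16 % 2, hp⟩ (rsB (i / 16)) (rsB (i / 16 + 1))
  apply hj
  have hi : i = 16 * (i / 16) + i % 16 := by omega
  have hjL : (j : ℕ) < L := j.isLt
  have e1 : rsW (i % 16) (i / 16 % 2) (rsB (i / 16)) (rsB (i / 16 + 1)) j
      = rsB (i + j) := by
    conv_rhs => rw [hi]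
    rw [rsB_window _ _ _ hr (by omega)]
  have e2 : rsW (i % 16) (i / 16 % 2) (rsB (i / 16)) (rsB (i / 16 + 1)) (L - 1 - (j : ℕ))
      = rsB (i + (L - 1 - (j : ℕ))) := by
    conv_rhs => rw [hi]
    rw [rsB_window _ _ _ hr (by omega)]
  have e3 : i + (L - 1 - (j : ℕ)) = i + L - 1 - j := by omega
  simp only [e1, e2, e3]
  exact h j hjL

lemma pal_shrink {A : Type*} {x : ℕ → A} {m : ℕ} (hm : 2 ≤ m)
    (h : HasPalFactor x m) : HasPalFactor x (m - 2) := by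
  obtain ⟨i, h⟩ := h
  refine ⟨i + 1, fun j hj => ?_⟩
  have e1 : i + 1 + j = i + (j + 1) := by omega
  have e2 : i + 1 + (m - 2) - 1 - j = i + m - 1 - (j + 1) := by omega
  rw [e1, e2]
  exact h (j + 1) (by omega)

lemma rsB_no_pal : ∀ m : ℕ, 15 ≤ m → ¬ HasPalFactor rsB m := by
  intro m
  induction m using Nat.strong_induction_on with
  | _ m ih =>
    intro hm h
    by_cases h15 : m = 15
    · exact rsB_no_pal_of_base 15 (Or.inl rfl)
        (by intro r p a b; exact check15 r p a b) (h15 ▸ h)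
    by_cases h16 : m = 16
    · exact rsB_no_pal_of_base 16 (Or.inr rfl)
        (by intro r p a b; exact check16 r p a b) (h16 ▸ h)
    have hm2 : 17 ≤ m := by omega
    exact ih (m - 2) (by omega) (by omega) (pal_shrink (by omega) h)

/-- The binary Rudin–Shapiro sequence contains no palindromic factor of any length
`m ≥ 15`; in particular, it is not palindromic. -/
theorem rsB_not_palindromic :
    (∀ m : ℕ, 15 ≤ m → ¬ HasPalFactor rsB m) ∧ ¬ Palindromic rsB := by
  refine ⟨rsB_no_pal, fun hP => ?_⟩
  obtain ⟨ℓ, hℓ, hpal⟩ := hP 15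
  exact rsB_no_pal ℓ hℓ hpal
end
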